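/- A set A ⊆ ℤ is sufficiently sparse if and only if for all n ≥ 1, the lower asymptotic density of Σ_n(±A) ∩ ℤ⁺ is 0. -/

import Mathlib

/-!
If `Σ_n(±A)` contains a subgroup `dℤ` with `d > 0`, it contains at least `m / d` of the integers
in `[1, m]`, so its lower density is positive.

Conversely, suppose `S = Σ_n(±A)` has positive lower density and let `dℤ` be the subgroup it
generates, so that `d ∈ Σ_M(±A)` for some `M`. The set `C = {c ∈ ℕ | d c ∈ Σ_{max n M}(±A)}`
contains `0` and `1` and has positive lower density, hence positive Schnirelmann density `σ C`.
Schnirelmann's inequality `1 - σ(X + Y) ≤ (1 - σ X)(1 - σ Y)` makes `σ(k • C) > 1/2` for some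
`k`, and then `k • C + k • C = ℕ`. Hence `Σ_{2k max n M}(±A)` contains `dℤ`.
-/

/-- `Σ_n(±A) = {x_1 + ... + x_k : k ≤ n, |x_i| ∈ A}`. -/
def SigmaSet (A : Set ℤ) (n : ℕ) : Set ℤ :=
  {x | ∃ k ≤ n, ∃ y : Fin k → ℤ, (∀ i, |y i| ∈ A) ∧ x = ∑ i, y i}

/-- `A` is sufficiently sparse if no `Σ_n(±A)` contains a nontrivial subgroup of `ℤ`. -/
def SuffSparse (A : Set ℤ) : Prop :=
  ∀ n : ℕ, ∀ H : AddSubgroup ℤ, (H : Set ℤ) ⊆ SigmaSet A n → H = ⊥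

open Finset Filter AddSubgroup
open scoped Classical Pointwise

namespace SigmaSet

variable {A : Set ℤ} {m n : ℕ} {x z : ℤ}

lemma zero_mem : (0 : ℤ) ∈ SigmaSet A n :=
  ⟨0, n.zero_le, ![], finZeroElim, by simp⟩

lemma mono (h : m ≤ n) : SigmaSet A m ⊆ SigmaSet A n := by
  rintro x ⟨k, hk, y, hy, rfl⟩
  exact ⟨k, hk.trans h, y, hy, rfl⟩

lemma neg_mem (hx : x ∈ SigmaSet A n) : -x ∈ SigmaSet A n := by
  obtain ⟨k, hk, y, hy, rfl⟩ := hx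
  exact ⟨k, hk, -y, fun i => by simpa using hy i, by simp⟩

lemma add_mem (hx : x ∈ SigmaSet A m) (hz : z ∈ SigmaSet A n) : x + z ∈ SigmaSet A (m + n) := by
  obtain ⟨k, hk, y, hy, rfl⟩ := hx
  obtain ⟨l, hl, w, hw, rfl⟩ := hz
  refine ⟨k + l, Nat.add_le_add hk hl, Fin.append y w, fun i => ?_, by simp [Fin.sum_univ_add]⟩
  refine Fin.addCases (fun j => ?_) (fun j => ?_) i
  · simpa using hy j
  · simpa using hw j

lemma nsmul_subset (k : ℕ) : k • SigmaSet A n ⊆ SigmaSet A (k * n) := by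
  induction k with
  | zero => simpa using zero_mem
  | succ k ih =>
    rintro _ ⟨x, hx, z, hz, rfl⟩
    rw [add_one_mul]
    exact add_mem (ih hx) hz

def iUnionAddSubgroup (A : Set ℤ) : AddSubgroup ℤ where
  carrier := ⋃ n, SigmaSet A n
  zero_mem' := Set.mem_iUnion.2 ⟨0, zero_mem⟩
  add_mem' := by
    simp only [Set.mem_iUnion]
    rintro _ _ ⟨m, hx⟩ ⟨n, hz⟩
    exact ⟨m + n, add_mem hx hz⟩
  neg_mem' := by
    simp only [Set.mem_iUnion]
    rintro _ ⟨n, hx⟩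
    exact ⟨n, neg_mem hx⟩

lemma exists_mem_of_mem_closure (hx : x ∈ AddSubgroup.closure (SigmaSet A n)) :
    ∃ M, x ∈ SigmaSet A M :=
  Set.mem_iUnion.1 <| (closure_le (iUnionAddSubgroup A)).2 (Set.subset_iUnion _ n) hx

lemma zmultiples_subset {d : ℤ} (h : ∀ k : ℕ, d * k ∈ SigmaSet A n) :
    (zmultiples d : Set ℤ) ⊆ SigmaSet A n := by
  rintro _ ⟨k, rfl⟩
  obtain ⟨k, rfl | rfl⟩ := Int.eq_nat_or_neg k
  · simpa [mul_comm] using h k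
  · simpa [mul_comm] using neg_mem (h k)

end SigmaSet

lemma Int.exists_addSubgroup_eq_zmultiples_natCast (H : AddSubgroup ℤ) :
    ∃ d : ℕ, H = zmultiples (d : ℤ) := by
  obtain ⟨a, rfl⟩ := Int.subgroup_cyclic H
  exact ⟨a.natAbs, by rw [Int.zmultiples_natAbs, zmultiples_eq_closure]⟩

noncomputable def missingCount (S : Set ℕ) (a b : ℕ) : ℕ := #{x ∈ Ioc a b | x ∉ S}

namespace missingCount

variable {S : Set ℕ} {a b c : ℕ}

lemma add (hab : a ≤ b) (hbc : b ≤ c) :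
    missingCount S a b + missingCount S b c = missingCount S a c := by
  rw [missingCount, missingCount, missingCount, ← Ioc_union_Ioc_eq_Ioc hab hbc, filter_union,
    card_union_of_disjoint (disjoint_filter_filter (Ioc_disjoint_Ioc_of_le le_rfl))]

lemma eq_zero (h : ∀ x ∈ Ioc a b, x ∈ S) : missingCount S a b = 0 := by
  simpa [missingCount, filter_eq_empty_iff] using h

lemma eq_sub (h : ∀ x ∈ Ioc a b, x ∉ S) : missingCount S a b = b - a := by
  rw [missingCount, filter_true_of_mem h, Nat.card_Ioc]

lemma card_filter_mem_add (S : Set ℕ) (n : ℕ) :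
    #{x ∈ Ioc 0 n | x ∈ S} + missingCount S 0 n = n := by
  rw [missingCount, card_filter_add_card_filter_not, Nat.card_Ioc, Nat.sub_zero]

lemma le_mul_one_sub_schnirelmannDensity (S : Set ℕ) (n : ℕ) :
    (missingCount S 0 n : ℝ) ≤ (1 - schnirelmannDensity S) * n := by
  have hcount := card_filter_mem_add S n
  have hσ := schnirelmannDensity_mul_le_card_filter (A := S) (n := n)
  rw [← Nat.cast_inj (R := ℝ), Nat.cast_add] at hcount
  linarith

lemma add_le_of_mem {A B : Set ℕ} {p n : ℕ} (hp : p ∈ B) (hpn : p ≤ n) :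
    missingCount (A + B) p n ≤ missingCount A 0 (n - p) := by
  refine card_le_card_of_injOn (· - p) (fun x hx => ?_) (fun x hx y hy hxy => ?_)
  · simp only [coe_filter, mem_Ioc, Set.mem_ofPred_eq] at hx ⊢
    exact ⟨by omega, fun hA => hx.2 ⟨x - p, hA, p, hp, Nat.sub_add_cancel (by omega)⟩⟩
  · simp only [coe_filter, mem_Ioc, Set.mem_ofPred_eq] at hx hy
    simp only at hxy
    omega

end missingCount

open missingCount in
lemma missingCount_add_le {A B : Set ℕ} (hA : 0 ∈ A) (hB : 0 ∈ B) (n : ℕ) :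
    (missingCount (A + B) 0 n : ℝ) ≤ (1 - schnirelmannDensity A) * missingCount B 0 n := by
  induction n using Nat.strong_induction_on with
  | _ n ih =>
  by_cases hn : n ∈ B
  · rcases n with _ | n
    · simp [missingCount]
    have hlast : ∀ S : Set ℕ, n + 1 ∈ S → missingCount S 0 (n + 1) = missingCount S 0 n :=
      fun S hS => by
        have hsplit := add (S := S) (Nat.zero_le n) (Nat.le_add_right n 1)
        have hend : missingCount S n (n + 1) = 0 :=
          eq_zero fun x hx => by rwa [show x = n + 1 by rw [mem_Ioc] at hx; omega]
        omega
    rw [hlast B hn, hlast (A + B) ⟨0, hA, n + 1, hn, zero_add _⟩]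
    exact ih n n.lt_succ_self
  -- Split `(0, n]` at the largest `p < n` in `B`: on `(p, n]` all of `B` is missing, while
  -- `A + B` only misses what `p + A` misses.
  · set p := Nat.findGreatest (· ∈ B) n
    have hpB : p ∈ B := Nat.findGreatest_spec (Nat.zero_le n) hB
    have hpn : p < n := lt_of_le_of_ne (Nat.findGreatest_le n) (fun h => hn (h ▸ hpB))
    have hgap : missingCount B p n = n - p :=
      eq_sub fun x hx => Nat.findGreatest_is_greatest (mem_Ioc.1 hx).1 (mem_Ioc.1 hx).2
    rw [← add (Nat.zero_le p) hpn.le, ← add (Nat.zero_le p) hpn.le, hgap]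
    have hA' := le_mul_one_sub_schnirelmannDensity A (n - p)
    have hAB : (missingCount (A + B) p n : ℝ) ≤ missingCount A 0 (n - p) := by
      exact_mod_cast add_le_of_mem hpB hpn.le
    push_cast
    linarith [ih p hpn]

open missingCount in
theorem one_sub_schnirelmannDensity_add_le {A B : Set ℕ} (hA : 0 ∈ A) (hB : 0 ∈ B) :
    1 - schnirelmannDensity (A + B) ≤
      (1 - schnirelmannDensity A) * (1 - schnirelmannDensity B) := by
  suffices 1 - (1 - schnirelmannDensity A) * (1 - schnirelmannDensity B) ≤
      schnirelmannDensity (A + B) by linarith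
  refine le_schnirelmannDensity_iff.2 fun n hn => ?_
  have hAB := card_filter_mem_add (A + B) n
  have hB' := card_filter_mem_add B n
  rw [← Nat.cast_inj (R := ℝ), Nat.cast_add] at hAB hB'
  have hσB := schnirelmannDensity_mul_le_card_filter (A := B) (n := n)
  have hσA : 0 ≤ 1 - schnirelmannDensity A := sub_nonneg.2 schnirelmannDensity_le_one
  rw [le_div_iff₀ (by positivity)]
  nlinarith [missingCount_add_le hA hB n]

theorem one_sub_schnirelmannDensity_nsmul_le {A : Set ℕ} (hA : 0 ∈ A) (k : ℕ) :
    1 - schnirelmannDensity (k • A) ≤ (1 - schnirelmannDensity A) ^ k := by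
  induction k with
  | zero =>
    rw [zero_nsmul, pow_zero, sub_le_self_iff]
    exact schnirelmannDensity_nonneg
  | succ k ih =>
    rw [succ_nsmul, pow_succ]
    exact (one_sub_schnirelmannDensity_add_le (Set.zero_mem_nsmul hA) hA).trans
      (mul_le_mul_of_nonneg_right ih (sub_nonneg.2 schnirelmannDensity_le_one))

theorem exists_nsmul_eq_univ_of_schnirelmannDensity_pos {A : Set ℕ} (hA : 0 ∈ A)
    (hσ : 0 < schnirelmannDensity A) : ∃ k : ℕ, k • A = Set.univ := by
  obtain ⟨k, hk⟩ := exists_pow_lt_of_lt_one (by norm_num : (0 : ℝ) < 1 / 2)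
    (sub_lt_self 1 hσ)
  refine ⟨k + k, ?_⟩
  rw [add_nsmul]
  have hkA := Set.zero_mem_nsmul (n := k) hA
  refine add_eq_univ_of_one_le_schirelmannDensity_add_schnirelmannDensity hkA hkA ?_
  linarith [one_sub_schnirelmannDensity_nsmul_le hA k]

namespace SigmaSet

variable {A : Set ℤ} {n : ℕ}

lemma zmultiples_subset_of_schnirelmannDensity_pos {d : ℤ}
    (hσ : 0 < schnirelmannDensity {c : ℕ | d * c ∈ SigmaSet A n}) :
    ∃ N, (zmultiples d : Set ℤ) ⊆ SigmaSet A N := by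
  obtain ⟨k, hk⟩ := exists_nsmul_eq_univ_of_schnirelmannDensity_pos
    (show d * ((0 : ℕ) : ℤ) ∈ SigmaSet A n by rw [Nat.cast_zero, mul_zero]; exact zero_mem) hσ
  let f : ℕ →+ ℤ := (AddMonoidHom.mulLeft d).comp (Nat.castAddMonoidHom ℤ)
  refine ⟨k * n, zmultiples_subset fun c => ?_⟩
  have hc : f c ∈ f '' (k • {c : ℕ | d * c ∈ SigmaSet A n}) := ⟨c, hk ▸ trivial, rfl⟩
  rw [Set.image_nsmul] at hc
  exact nsmul_subset k (Set.nsmul_subset_nsmul (Set.image_subset_iff.2 fun c hc => hc)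
    zero_mem le_rfl hc)

end SigmaSet

-- `d_*(S ∩ ℤ⁺)`
noncomputable def lowerDensity (S : Set ℤ) : ℝ :=
  liminf (fun m : ℕ => ((S ∩ Set.Icc 1 (m : ℤ)).ncard : ℝ) / m) atTop

section lowerDensity

variable {S : Set ℤ}

lemma ncard_inter_Icc_le (S : Set ℤ) (m : ℕ) : (S ∩ Set.Icc 1 (m : ℤ)).ncard ≤ m := by
  calc (S ∩ Set.Icc 1 (m : ℤ)).ncard ≤ (Set.Icc 1 (m : ℤ)).ncard :=
        Set.ncard_le_ncard Set.inter_subset_right (Set.finite_Icc _ _)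
    _ = m := by simp [Set.ncard_eq_toFinset_card']

lemma isCoboundedUnder_ge_density (S : Set ℤ) :
    IsCoboundedUnder (· ≥ ·) atTop (fun m : ℕ => ((S ∩ Set.Icc 1 (m : ℤ)).ncard : ℝ) / m) :=
  IsBoundedUnder.isCoboundedUnder_ge <| isBoundedUnder_of_eventually_le (a := 1) <|
    Eventually.of_forall fun m => div_le_one_of_le₀ (by exact_mod_cast ncard_inter_Icc_le S m)
      m.cast_nonneg

lemma lowerDensity_nonneg (S : Set ℤ) : 0 ≤ lowerDensity S :=
  le_liminf_of_le (isCoboundedUnder_ge_density S) (Eventually.of_forall fun _ => by positivity)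

lemma lowerDensity_eq_zero_of_subset (hS : S ⊆ {0}) : lowerDensity S = 0 := by
  have hempty : ∀ m : ℕ, S ∩ Set.Icc 1 (m : ℤ) = ∅ := fun m =>
    Set.eq_empty_of_forall_notMem fun x hx => by
      have := hS hx.1
      simp_all
  simp [lowerDensity, hempty]

lemma exists_forall_ge_mul_le_ncard (hS : 0 < lowerDensity S) :
    ∃ ε : ℝ, 0 < ε ∧ ∃ N : ℕ, ∀ m ≥ N, ε * m ≤ (S ∩ Set.Icc 1 (m : ℤ)).ncard := by
  have hlt : ∀ᶠ m : ℕ in atTop, lowerDensity S / 2 < ((S ∩ Set.Icc 1 (m : ℤ)).ncard : ℝ) / m :=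
    eventually_lt_of_lt_liminf (half_lt_self hS)
      (isBoundedUnder_of_eventually_ge (Eventually.of_forall fun _ => by positivity))
  obtain ⟨N, hN⟩ := eventually_atTop.1 (hlt.and (eventually_gt_atTop 0))
  refine ⟨lowerDensity S / 2, half_pos hS, N, fun m hm => ?_⟩
  obtain ⟨hlt, hm0⟩ := hN m hm
  exact ((lt_div_iff₀ (by exact_mod_cast hm0)).1 hlt).le

lemma div_le_ncard_inter_Icc_of_zmultiples_subset {d : ℕ} (hd : 0 < d)
    (h : (zmultiples (d : ℤ) : Set ℤ) ⊆ S) (m : ℕ) : m / d ≤ (S ∩ Set.Icc 1 (m : ℤ)).ncard := by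
  have hinj : Function.Injective fun k : ℕ => (d * k : ℤ) := fun a b hab => by
    simpa [hd.ne'] using hab
  calc m / d = ((fun k : ℕ => (d * k : ℤ)) '' Set.Icc 1 (m / d)).ncard := by
        rw [Set.ncard_image_of_injective _ hinj, ← Finset.coe_Icc, Set.ncard_coe_finset]
        simp
    _ ≤ _ := Set.ncard_le_ncard ?_ ((Set.finite_Icc _ _).inter_of_right _)
  rintro _ ⟨k, hk, rfl⟩
  rw [Set.mem_Icc] at hk
  dsimp only
  refine ⟨h (Int.mem_zmultiples_iff.2 (dvd_mul_right _ _)), ?_, ?_⟩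
  · exact_mod_cast Nat.mul_pos hd hk.1
  · exact_mod_cast (Nat.mul_le_mul_left d hk.2).trans (Nat.mul_div_le m d)

lemma lowerDensity_pos_of_zmultiples_subset {d : ℕ} (hd : 0 < d)
    (h : (zmultiples (d : ℤ) : Set ℤ) ⊆ S) : 0 < lowerDensity S := by
  refine (inv_pos.2 (by positivity : (0 : ℝ) < 2 * d)).trans_le <|
    le_liminf_of_le (isCoboundedUnder_ge_density S) (eventually_atTop.2 ⟨d, fun m hdm => ?_⟩)
  have hcount := div_le_ncard_inter_Icc_of_zmultiples_subset hd h m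
  have hm : m < m / d * d + d := Nat.lt_div_mul_add hd
  have hd_le : d ≤ m / d * d := Nat.le_mul_of_pos_left d (Nat.div_pos hdm hd)
  rw [le_div_iff₀ (by exact_mod_cast hd.trans_le hdm), inv_mul_le_iff₀ (by positivity)]
  have : m ≤ 2 * d * (S ∩ Set.Icc 1 (m : ℤ)).ncard := by nlinarith
  exact_mod_cast this

end lowerDensity

lemma schnirelmannDensity_pos_of_one_mem {C : Set ℕ} (hC : 1 ∈ C) {ε : ℝ} (hε : 0 < ε) {N : ℕ}
    (h : ∀ q ≥ N, ε * q ≤ #{c ∈ Ioc 0 q | c ∈ C}) : 0 < schnirelmannDensity C := by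
  refine (lt_min hε (Nat.one_div_pos_of_nat (n := N))).trans_le <|
    le_schnirelmannDensity_iff.2 fun q hq => ?_
  have hq' : (0 : ℝ) < q := by exact_mod_cast hq
  rw [le_div_iff₀ hq']
  rcases le_or_gt N q with hNq | hqN
  · exact (mul_le_mul_of_nonneg_right (min_le_left _ _) hq'.le).trans (h q hNq)
  · have hone : 1 ≤ #{c ∈ Ioc 0 q | c ∈ C} :=
      card_pos.2 ⟨1, mem_filter.2 ⟨mem_Ioc.2 ⟨one_pos, hq⟩, hC⟩⟩
    calc min ε (1 / (N + 1 : ℝ)) * q ≤ 1 / (N + 1) * q :=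
          mul_le_mul_of_nonneg_right (min_le_right _ _) hq'.le
      _ ≤ 1 := by
          rw [div_mul_eq_mul_div, one_mul, div_le_one (by positivity)]
          exact_mod_cast hqN.le.trans N.le_succ
      _ ≤ _ := by exact_mod_cast hone

lemma ncard_inter_Icc_le_card_filter {S T : Set ℤ} {d : ℕ} (hST : S ⊆ T)
    (hSd : S ⊆ zmultiples (d : ℤ)) (q : ℕ) :
    (S ∩ Set.Icc 1 ((d * q : ℕ) : ℤ)).ncard ≤ #{c ∈ Ioc 0 q | c ∈ {c : ℕ | (d : ℤ) * c ∈ T}} := by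
  rw [← Set.ncard_coe_finset]
  refine (Set.ncard_le_ncard (t := (fun c : ℕ => (d : ℤ) * c) '' _) ?_
    ((finite_toSet _).image _)).trans (Set.ncard_image_le (finite_toSet _))
  rintro s ⟨hsS, hs1, hsq⟩
  obtain ⟨k, rfl⟩ := Int.mem_zmultiples_iff.1 (hSd hsS)
  push_cast at hsq
  have hk : 0 < k := by nlinarith
  have hkq : k ≤ q := by nlinarith
  refine ⟨k.toNat, ?_, by simp [hk.le, mul_comm]⟩
  simp only [coe_filter, mem_Ioc, Set.mem_ofPred_eq]
  refine ⟨⟨by omega, by omega⟩, ?_⟩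
  simpa [hk.le, mul_comm] using hST hsS

lemma schnirelmannDensity_pos_of_lowerDensity_pos {S T : Set ℤ} {d : ℕ} (hd : 0 < d)
    (hST : S ⊆ T) (hSd : S ⊆ zmultiples (d : ℤ)) (hdT : (d : ℤ) ∈ T)
    (hS : 0 < lowerDensity S) : 0 < schnirelmannDensity {c : ℕ | (d : ℤ) * c ∈ T} := by
  obtain ⟨ε, hε, N, hN⟩ := exists_forall_ge_mul_le_ncard hS
  refine schnirelmannDensity_pos_of_one_mem (by simpa using hdT) hε fun q (hq : N ≤ q) => ?_
  calc ε * q ≤ ε * (d * q : ℕ) := by gcongr; exact_mod_cast Nat.le_mul_of_pos_left q hd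
    _ ≤ (S ∩ Set.Icc 1 ((d * q : ℕ) : ℤ)).ncard :=
        hN _ (hq.trans (Nat.le_mul_of_pos_left q hd))
    _ ≤ #{c ∈ Ioc 0 q | c ∈ {c : ℕ | (d : ℤ) * c ∈ T}} := by
        exact_mod_cast ncard_inter_Icc_le_card_filter hST hSd q

theorem SuffSparse.lowerDensity_sigmaSet_eq_zero {A : Set ℤ} (hA : SuffSparse A) (n : ℕ) :
    lowerDensity (SigmaSet A n) = 0 := by
  by_contra hne
  have hpos : 0 < lowerDensity (SigmaSet A n) := (lowerDensity_nonneg _).lt_of_ne' hne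
  obtain ⟨d, hd⟩ := Int.exists_addSubgroup_eq_zmultiples_natCast (closure (SigmaSet A n))
  have hSd : SigmaSet A n ⊆ zmultiples (d : ℤ) := hd ▸ subset_closure
  have hd0 : 0 < d := Nat.pos_of_ne_zero fun h0 =>
    hne (lowerDensity_eq_zero_of_subset (by simpa [h0] using hSd))
  obtain ⟨M, hdM⟩ := SigmaSet.exists_mem_of_mem_closure (hd ▸ mem_zmultiples (d : ℤ))
  obtain ⟨N, hN⟩ := SigmaSet.zmultiples_subset_of_schnirelmannDensity_pos <|
    schnirelmannDensity_pos_of_lowerDensity_pos hd0 (SigmaSet.mono (le_max_left n M)) hSd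
      (SigmaSet.mono (le_max_right n M) hdM) hpos
  exact hd0.ne' (by simpa using hA N _ hN)

/-- `A ⊆ ℤ` is sufficiently sparse iff for all `n ≥ 1` the lower asymptotic density of
`Σ_n(±A) ∩ ℤ⁺` is `0`. -/
theorem stmt16 (A : Set ℤ) :
    SuffSparse A ↔ ∀ n : ℕ, 1 ≤ n →
      Filter.liminf (fun m : ℕ =>
        (Set.ncard (SigmaSet A n ∩ Set.Icc 1 (m : ℤ)) : ℝ) / m) Filter.atTop = 0 := by
  refine ⟨fun hA n _ => hA.lowerDensity_sigmaSet_eq_zero n, fun h n H hH => ?_⟩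
  by_contra hne
  obtain ⟨d, rfl⟩ := Int.exists_addSubgroup_eq_zmultiples_natCast H
  have hd : 0 < d := Nat.pos_of_ne_zero fun h0 => hne (by simp [h0])
  exact (lowerDensity_pos_of_zmultiples_subset hd
    (hH.trans (SigmaSet.mono (le_max_left n 1)))).ne' (h _ (le_max_right n 1))
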